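/- Let φ be a C¹ orientation-preserving diffeomorphism of the circle 𝕊¹ and σ ∈ (0,1). Then for every w ∈ H^σ(𝕊¹), ‖w∘φ‖_{H^σ} ≤ (‖1/φ_x‖_{L^∞}^{1/2} + ‖1/φ_x‖_{L^∞} ‖φ_x‖_{L^∞}^{(1+2σ)/2}) ‖w‖_{H^σ}. -/

import Mathlib

open MeasureTheory ENNReal

/-- The squared `L²` norm on the circle `ℝ/ℤ` (valued in `ℝ≥0∞`). -/
noncomputable def L2Sq (w : AddCircle (1 : ℝ) → ℂ) : ℝ≥0∞ :=
  ∫⁻ x, (‖w x‖₊ : ℝ≥0∞) ^ 2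

/-- The squared Gagliardo seminorm
`𝔭_σ(w)² = ∬ |w(x)−w(y)|² / |x−y|^{1+2σ} dx dy` on the circle (valued in `ℝ≥0∞`). -/
noncomputable def gagliardoSq (σ : ℝ) (w : AddCircle (1 : ℝ) → ℂ) : ℝ≥0∞ :=
  ∫⁻ x, ∫⁻ y, (‖w x - w y‖₊ : ℝ≥0∞) ^ 2 / edist x y ^ (1 + 2 * σ)

/-- The squared `H^σ` norm `‖w‖² = ‖w‖_{L²}² + 𝔭_σ(w)²`. -/
noncomputable def HsigmaSq (σ : ℝ) (w : AddCircle (1 : ℝ) → ℂ) : ℝ≥0∞ :=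
  L2Sq w + gagliardoSq σ w

/-!
Everything is pulled back to the lift `Φ`. Changing variables `x = Φ u` over the fundamental
domain `(0, 1]` gives `∫ f ∘ φ ≤ A ∫ f` for every nonnegative `f`, and since `Φ` commutes with
integer translations the circle distance satisfies `d(φ u, φ v) ≤ B d(u, v)`. Hence the `L²` part
picks up the factor `A`, while in the Gagliardo part the kernel picks up `B^{1+2σ}` and the double
integral `A²`; both factors are at most `(A^{1/2} + A B^{(1+2σ)/2})²`.
-/

open Set

lemma ENNReal.div_le_mul_div {a d d' C : ℝ≥0∞} (hC0 : C ≠ 0) (hCtop : C ≠ ⊤) (h : d' ≤ C * d) :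
    a / d ≤ C * (a / d') := by
  calc a / d ≤ a / (d' / C) := ENNReal.div_le_div_left (ENNReal.div_le_of_le_mul' h) a
    _ = C * (a / d') := by
      rw [div_eq_mul_inv, ENNReal.inv_div (Or.inl hCtop) (Or.inl hC0), ← mul_div_assoc,
        mul_comm a C, mul_div_assoc]

lemma UnitAddCircle.coe_intCast (k : ℤ) : ((k : ℝ) : UnitAddCircle) = 0 := by
  rw [← zsmul_one, AddCircle.coe_zsmul, AddCircle.coe_period, smul_zero]

section CircleLift

variable {Φ Φ' : ℝ → ℝ}

lemma map_add_int_of_map_add_one (hper : ∀ x, Φ (x + 1) = Φ x + 1) (k : ℤ) (x : ℝ) :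
    Φ (x + k) = Φ x + k := by
  have hperiodic : Function.Periodic (fun x ↦ Φ x - x) 1 := fun x ↦ by
    simp only [hper]; ring
  have := hperiodic.int_mul k x
  simp only [mul_one] at this
  linarith

lemma dist_coe_map_le_of_lift (hper : ∀ x, Φ (x + 1) = Φ x + 1) {B : ℝ}
    (hlip : ∀ a b, |Φ a - Φ b| ≤ B * |a - b|) (u v : ℝ) :
    dist (Φ u : UnitAddCircle) (Φ v) ≤ B * dist (u : UnitAddCircle) v := by
  -- `u - (v + k)` is the representative of `u - v` nearest to `0`, so it realises `d(u, v)`.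
  set k := round (u - v)
  calc dist (Φ u : UnitAddCircle) (Φ v) = ‖((Φ u - Φ (v + k) : ℝ) : UnitAddCircle)‖ := by
        rw [dist_eq_norm, map_add_int_of_map_add_one hper, ← sub_sub, AddCircle.coe_sub,
          AddCircle.coe_sub, UnitAddCircle.coe_intCast, sub_zero]
    _ ≤ |Φ u - Φ (v + k)| := QuotientAddGroup.norm_mk_le_norm
    _ ≤ B * |u - (v + k)| := hlip _ _
    _ = B * dist (u : UnitAddCircle) v := by
        rw [dist_eq_norm, ← AddCircle.coe_sub, UnitAddCircle.norm_eq, ← sub_sub]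

lemma edist_coe_map_le_of_hasDerivAt (hΦ : ∀ x, HasDerivAt Φ (Φ' x) x)
    (hper : ∀ x, Φ (x + 1) = Φ x + 1) {B : ℝ} (hB : ∀ x, ‖Φ' x‖ ≤ B) (u v : ℝ) :
    edist (Φ u : UnitAddCircle) (Φ v) ≤ ENNReal.ofReal B * edist (u : UnitAddCircle) v := by
  have hlip (a b : ℝ) : |Φ a - Φ b| ≤ B * |a - b| := by
    simpa only [Real.norm_eq_abs] using Convex.norm_image_sub_le_of_norm_hasDerivWithin_le
      (fun x _ ↦ (hΦ x).hasDerivWithinAt) (fun x _ ↦ hB x) convex_univ (mem_univ b) (mem_univ a)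
  rw [edist_dist, edist_dist, ← ENNReal.ofReal_mul ((norm_nonneg _).trans (hB 0))]
  exact ENNReal.ofReal_le_ofReal (dist_coe_map_le_of_lift hper hlip u v)

lemma lintegral_Ioc_deriv_mul_comp_lift (hΦ : ∀ x, HasDerivAt Φ (Φ' x) x) (hpos : ∀ x, 0 < Φ' x)
    (hper : ∀ x, Φ (x + 1) = Φ x + 1) (f : UnitAddCircle → ℝ≥0∞) :
    ∫⁻ u in Ioc 0 1, ENNReal.ofReal (Φ' u) * f (Φ u) = ∫⁻ x, f x := by
  have hmono : StrictMono Φ := strictMono_of_hasDerivAt_pos hΦ hpos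
  have himage : Φ '' Ioc 0 1 = Ioc (Φ 0) (Φ 0 + 1) := by
    have hΦ1 : Φ 1 = Φ 0 + 1 := by simpa using hper 0
    rw [← hΦ1]
    refine Subset.antisymm ?_ ?_
    · rintro _ ⟨x, hx, rfl⟩
      exact ⟨hmono hx.1, hmono.monotone hx.2⟩
    · exact intermediate_value_Ioc zero_le_one
        (continuous_iff_continuousAt.2 fun x ↦ (hΦ x).continuousAt).continuousOn
  have hcov := lintegral_image_eq_lintegral_abs_det_fderiv_mul volume
    (measurableSet_Ioc (a := 0) (b := 1))
    (fun x _ ↦ (hΦ x).hasFDerivAt.hasFDerivWithinAt) hmono.injective.injOn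
    (fun y : ℝ ↦ f y)
  simpa only [ContinuousLinearMap.det_toSpanSingleton, himage, AddCircle.lintegral_preimage,
    abs_of_pos, hpos] using hcov.symm


lemma lintegral_comp_le_of_lift (hΦ : ∀ x, HasDerivAt Φ (Φ' x) x) (hpos : ∀ x, 0 < Φ' x)
    (hper : ∀ x, Φ (x + 1) = Φ x + 1) {A : ℝ} (hA : ∀ x, (Φ' x)⁻¹ ≤ A)
    {φ : UnitAddCircle → UnitAddCircle} (hφ : ∀ x : ℝ, φ x = (Φ x : ℝ))
    (f : UnitAddCircle → ℝ≥0∞) :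
    ∫⁻ x, f (φ x) ≤ ENNReal.ofReal A * ∫⁻ x, f x := by
  have hAΦ' (u : ℝ) : 1 ≤ ENNReal.ofReal A * ENNReal.ofReal (Φ' u) := by
    rw [← ENNReal.ofReal_mul' (hpos u).le, ← ENNReal.ofReal_one]
    exact ENNReal.ofReal_le_ofReal ((inv_le_iff_one_le_mul₀ (hpos u)).1 (hA u))
  calc ∫⁻ x, f (φ x) = ∫⁻ u in Ioc 0 1, f (Φ u) := by
        rw [← UnitAddCircle.lintegral_preimage 0, zero_add]
        simp only [hφ]
    _ ≤ ∫⁻ u in Ioc 0 1, ENNReal.ofReal A * (ENNReal.ofReal (Φ' u) * f (Φ u)) :=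
        lintegral_mono fun u ↦ by
          rw [← mul_assoc]
          exact le_mul_of_one_le_left' (hAΦ' u)
    _ = ENNReal.ofReal A * ∫⁻ x, f x := by
        rw [lintegral_const_mul' _ _ ENNReal.ofReal_ne_top,
          lintegral_Ioc_deriv_mul_comp_lift hΦ hpos hper]

lemma L2Sq_comp_le (hΦ : ∀ x, HasDerivAt Φ (Φ' x) x) (hpos : ∀ x, 0 < Φ' x)
    (hper : ∀ x, Φ (x + 1) = Φ x + 1) {A : ℝ} (hA : ∀ x, (Φ' x)⁻¹ ≤ A)
    {φ : UnitAddCircle → UnitAddCircle} (hφ : ∀ x : ℝ, φ x = (Φ x : ℝ))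
    (w : UnitAddCircle → ℂ) :
    L2Sq (w ∘ φ) ≤ ENNReal.ofReal A * L2Sq w :=
  lintegral_comp_le_of_lift hΦ hpos hper hA hφ fun x ↦ (‖w x‖₊ : ℝ≥0∞) ^ 2


lemma gagliardoSq_comp_le (hΦ : ∀ x, HasDerivAt Φ (Φ' x) x) (hpos : ∀ x, 0 < Φ' x)
    (hper : ∀ x, Φ (x + 1) = Φ x + 1) {A B : ℝ} (hA : ∀ x, (Φ' x)⁻¹ ≤ A) (hB : ∀ x, Φ' x ≤ B)
    {φ : UnitAddCircle → UnitAddCircle} (hφ : ∀ x : ℝ, φ x = (Φ x : ℝ))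
    {σ : ℝ} (hσ : 0 ≤ 1 + 2 * σ) (w : UnitAddCircle → ℂ) :
    gagliardoSq σ (w ∘ φ)
      ≤ ENNReal.ofReal B ^ (1 + 2 * σ) * ENNReal.ofReal A ^ 2 * gagliardoSq σ w := by
  set C := ENNReal.ofReal B ^ (1 + 2 * σ)
  have hC0 : C ≠ 0 :=
    (ENNReal.rpow_pos (ENNReal.ofReal_pos.2 ((hpos 0).trans_le (hB 0))) ENNReal.ofReal_ne_top).ne'
  have hCtop : C ≠ ⊤ := ENNReal.rpow_ne_top_of_nonneg hσ ENNReal.ofReal_ne_top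
  set g : UnitAddCircle → UnitAddCircle → ℝ≥0∞ :=
    fun p q ↦ (‖w p - w q‖₊ : ℝ≥0∞) ^ 2 / edist p q ^ (1 + 2 * σ)
  have hkernel (p q : UnitAddCircle) :
      (‖w (φ p) - w (φ q)‖₊ : ℝ≥0∞) ^ 2 / edist p q ^ (1 + 2 * σ) ≤ C * g (φ p) (φ q) := by
    induction p using QuotientAddGroup.induction_on with | H u => ?_
    induction q using QuotientAddGroup.induction_on with | H v => ?_
    refine ENNReal.div_le_mul_div hC0 hCtop ?_
    rw [hφ, hφ, ← ENNReal.mul_rpow_of_nonneg _ _ hσ]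
    refine ENNReal.rpow_le_rpow (edist_coe_map_le_of_hasDerivAt hΦ hper (fun x ↦ ?_) u v) hσ
    rw [Real.norm_of_nonneg (hpos x).le]
    exact hB x
  calc gagliardoSq σ (w ∘ φ) ≤ ∫⁻ p, ∫⁻ q, C * g (φ p) (φ q) :=
        lintegral_mono fun p ↦ lintegral_mono fun q ↦ hkernel p q
    _ = C * ∫⁻ p, ∫⁻ q, g (φ p) (φ q) := by simp_rw [lintegral_const_mul' _ _ hCtop]
    _ ≤ C * ∫⁻ p, ENNReal.ofReal A * ∫⁻ q, g (φ p) q := by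
        gcongr with p
        exact lintegral_comp_le_of_lift hΦ hpos hper hA hφ (g (φ p))
    _ ≤ C * (ENNReal.ofReal A * (ENNReal.ofReal A * ∫⁻ p, ∫⁻ q, g p q)) := by
        rw [lintegral_const_mul' _ _ ENNReal.ofReal_ne_top]
        gcongr
        exact lintegral_comp_le_of_lift hΦ hpos hper hA hφ fun p ↦ ∫⁻ q, g p q
    _ = C * ENNReal.ofReal A ^ 2 * gagliardoSq σ w := by
        rw [pow_two, mul_assoc, mul_assoc]
        rfl


lemma HsigmaSq_comp_le (hΦ : ∀ x, HasDerivAt Φ (Φ' x) x) (hpos : ∀ x, 0 < Φ' x)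
    (hper : ∀ x, Φ (x + 1) = Φ x + 1) {A B : ℝ} (hA : ∀ x, (Φ' x)⁻¹ ≤ A) (hB : ∀ x, Φ' x ≤ B)
    {φ : UnitAddCircle → UnitAddCircle} (hφ : ∀ x : ℝ, φ x = (Φ x : ℝ))
    {σ : ℝ} (hσ : 0 ≤ 1 + 2 * σ) (w : UnitAddCircle → ℂ) :
    HsigmaSq σ (w ∘ φ)
      ≤ ENNReal.ofReal (A ^ (1 / 2 : ℝ) + A * B ^ ((1 + 2 * σ) / 2)) ^ 2 * HsigmaSq σ w := by
  have hA0 : 0 ≤ A := (inv_pos.2 (hpos 0)).le.trans (hA 0)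
  have hB0 : 0 ≤ B := (hpos 0).le.trans (hB 0)
  have hL2 : ENNReal.ofReal A = ENNReal.ofReal (A ^ (1 / 2 : ℝ)) ^ 2 := by
    rw [← ENNReal.ofReal_pow (by positivity), ← Real.sqrt_eq_rpow, Real.sq_sqrt hA0]
  have hgagliardo : ENNReal.ofReal B ^ (1 + 2 * σ) * ENNReal.ofReal A ^ 2
      = ENNReal.ofReal (A * B ^ ((1 + 2 * σ) / 2)) ^ 2 := by
    rw [ENNReal.ofReal_rpow_of_nonneg hB0 hσ, ← ENNReal.ofReal_pow hA0,
      ← ENNReal.ofReal_mul (by positivity), ← ENNReal.ofReal_pow (by positivity), mul_pow,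
      ← Real.rpow_mul_natCast hB0, mul_comm]
    norm_num
  rw [HsigmaSq, HsigmaSq, mul_add]
  gcongr
  · calc L2Sq (w ∘ φ) ≤ ENNReal.ofReal A * L2Sq w := L2Sq_comp_le hΦ hpos hper hA hφ w
      _ ≤ _ := by
        rw [hL2]
        gcongr
        exact le_add_of_nonneg_right (by positivity)
  · calc gagliardoSq σ (w ∘ φ)
        ≤ ENNReal.ofReal B ^ (1 + 2 * σ) * ENNReal.ofReal A ^ 2 * gagliardoSq σ w :=
          gagliardoSq_comp_le hΦ hpos hper hA hB hφ hσ w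
      _ ≤ _ := by
        rw [hgagliardo]
        gcongr
        exact le_add_of_nonneg_left (by positivity)

end CircleLift

theorem stmt15_general (σ : ℝ) (hσ0 : 0 < σ)
    (Φ Φ' : ℝ → ℝ) (hΦ : ∀ x, HasDerivAt Φ (Φ' x) x)
    (hper : ∀ x, Φ (x + 1) = Φ x + 1) (hpos : ∀ x, 0 < Φ' x)
    (A B : ℝ) (hA : ∀ x, (Φ' x)⁻¹ ≤ A) (hB : ∀ x, Φ' x ≤ B)
    (φ : AddCircle (1 : ℝ) → AddCircle (1 : ℝ)) (hφ : ∀ x : ℝ, φ x = (Φ x : ℝ))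
    (w : AddCircle (1 : ℝ) → ℂ) :
    HsigmaSq σ (w ∘ φ) ^ (1 / 2 : ℝ)
      ≤ ENNReal.ofReal (A ^ (1 / 2 : ℝ) + A * B ^ ((1 + 2 * σ) / 2))
          * HsigmaSq σ w ^ (1 / 2 : ℝ) := by
  calc HsigmaSq σ (w ∘ φ) ^ (1 / 2 : ℝ)
      ≤ (ENNReal.ofReal (A ^ (1 / 2 : ℝ) + A * B ^ ((1 + 2 * σ) / 2)) ^ 2
          * HsigmaSq σ w) ^ (1 / 2 : ℝ) :=
        ENNReal.rpow_le_rpow (HsigmaSq_comp_le hΦ hpos hper hA hB hφ (by linarith) w)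
          (by norm_num)
    _ = _ := by
        rw [ENNReal.mul_rpow_of_nonneg _ _ (by norm_num), ← ENNReal.rpow_natCast,
          ← ENNReal.rpow_mul]
        norm_num

/-- Let `φ` be a `C¹` orientation-preserving diffeomorphism of the
circle `ℝ/ℤ`, given by a lift `Φ : ℝ → ℝ` with `Φ(x+1) = Φ(x)+1`, `Φ' > 0` continuous,
`1/Φ' ≤ A` and `Φ' ≤ B` (so `A = ‖1/φ_x‖_{L^∞}`, `B = ‖φ_x‖_{L^∞}` bound the norms).
Then for `σ ∈ (0,1)` and every `w ∈ H^σ(𝕊¹)`,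
`‖w∘φ‖_{H^σ} ≤ (A^{1/2} + A B^{(1+2σ)/2}) ‖w‖_{H^σ}`. -/
theorem stmt15 (σ : ℝ) (hσ0 : 0 < σ) (hσ1 : σ < 1)
    (Φ Φ' : ℝ → ℝ) (hΦ : ∀ x, HasDerivAt Φ (Φ' x) x) (hΦ'c : Continuous Φ')
    (hper : ∀ x, Φ (x + 1) = Φ x + 1) (hpos : ∀ x, 0 < Φ' x)
    (A B : ℝ) (hA : ∀ x, (Φ' x)⁻¹ ≤ A) (hB : ∀ x, Φ' x ≤ B)
    (φ : AddCircle (1 : ℝ) → AddCircle (1 : ℝ)) (hφ : ∀ x : ℝ, φ x = (Φ x : ℝ))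
    (w : AddCircle (1 : ℝ) → ℂ) (hw : Measurable w) :
    HsigmaSq σ (w ∘ φ) ^ (1 / 2 : ℝ)
      ≤ ENNReal.ofReal (A ^ (1 / 2 : ℝ) + A * B ^ ((1 + 2 * σ) / 2))
          * HsigmaSq σ w ^ (1 / 2 : ℝ) :=
  stmt15_general σ hσ0 Φ Φ' hΦ hper hpos A B hA hB φ hφ w
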